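/- Let $V$ be a complete brace algebra with left unit $\mathbf{1}$ over a field, $\mu \in F_0V^1$ a Maurer-Cartan element, and equip $V$ with the shifted $A_\infty$-structure $\mu_V^1(f) = \mu \star f - (-1)^{|f|} f \star \mu$ and $\mu_V^i(f_1,\dots,f_i) = \mu\{f_1,\dots,f_i\}$ for $i \ge 2$. Then for a group-like element $f = \mathbf{1} + f_+$ with $f_+ \in F_2V^0$, the curvature $\kappa(f_+) = \sum_{i\ge 1} \mu_V^i(f_+,\dots,f_+)$ equals $\mu \odot f - f \star \mu$. Hence $f_+ $ is a Maurer-Cartan element of the $A_\infty$-algebra $F_2V$ if and only if $f$ is an $\infty$-isotopy of $(V,\mu)$. -/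

import Mathlib

/- A complete (bi)graded pre-Lie algebra over `k`, modelled concretely as the product
`V = ∏_{n ≥ -1} V^{(n)}` of its weight components: `W n d` is the component of weight `n`
and cohomological degree `d` (the components with `n < -1` play no role).  An element of
pure degree `d` is a function `v : ∀ n, W n d`; the filtration `F_m V` consists of the
elements supported in weights `≥ m`, and `V₊ = F₁V`.  Products are computed weightwise,
so all the infinite sums appearing below (`exp`, `⊙`, …) are finite in each weight and no
topology is needed: this is exactly completeness with respect to the weight filtration. -/

namespace Stmt

variable {k : Type} [Field k]
variable {W : ℤ → ℤ → Type}
variable [∀ n d, AddCommGroup (W n d)] [∀ n d, Module k (W n d)]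

/-- transport along equalities of weight and degree -/
def wc {a b d e : ℤ} (h1 : a = b) (h2 : d = e) (x : W a d) : W b e := h2 ▸ h1 ▸ x

/-- degreewise elements of the completed algebra -/
abbrev El (W : ℤ → ℤ → Type) (d : ℤ) := ∀ n : ℤ, W n d

/-- `v` lies in the filtration step `F_m` (supported in weights `≥ m`) -/
def inF (m : ℤ) {d : ℤ} (v : El W d) : Prop := ∀ n : ℤ, n < m → v n = 0

/-- degree transport -/
def dc {d e : ℤ} (h : d = e) (v : El W d) : El W e := fun n => wc rfl h (v n)

/-- the weightwise `⋆`-product of the complete pre-Lie algebra -/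
noncomputable def pstar (s : ∀ ⦃a b d e : ℤ⦄, W a d → W b e → W (a + b) (d + e)) {d e : ℤ}
    (v : El W d) (w : El W e) : El W (d + e) :=
  fun n => ∑ a ∈ Finset.Icc (-1 : ℤ) (n + 1), wc (by ring) rfl (s (v a) (w (n - a)))

/-- the `⋆`-product of two degree-0 elements -/
noncomputable def star0 (s : ∀ ⦃a b d e : ℤ⦄, W a d → W b e → W (a + b) (d + e))
    (v w : El W 0) : El W 0 :=
  dc (by ring) (pstar s v w)

/-- bilinearity of the `⋆`-product -/
def IsBilin (s : ∀ ⦃a b d e : ℤ⦄, W a d → W b e → W (a + b) (d + e)) : Prop :=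
  (∀ ⦃a b d e : ℤ⦄ (x x' : W a d) (y : W b e), s (x + x') y = s x y + s x' y) ∧
  (∀ ⦃a b d e : ℤ⦄ (x : W a d) (y y' : W b e), s x (y + y') = s x y + s x y') ∧
  (∀ ⦃a b d e : ℤ⦄ (c : k) (x : W a d) (y : W b e), s (c • x) y = c • s x y) ∧
  (∀ ⦃a b d e : ℤ⦄ (c : k) (x : W a d) (y : W b e), s x (c • y) = c • s x y)

/-- the graded (right-symmetric) pre-Lie identity for `⋆` -/
def IsPreLie (s : ∀ ⦃a b d e : ℤ⦄, W a d → W b e → W (a + b) (d + e)) : Prop :=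
  ∀ ⦃a b c d e f : ℤ⦄ (x : W a d) (y : W b e) (z : W c f),
    s x (s y z) - wc (by ring) (by ring) (s (s x y) z) =
      ((-1 : k) ^ (e * f)) •
        (wc (by ring) (by ring) (s x (s z y)) - wc (by ring) (by ring) (s (s x z) y))

/-- `one` is a left unit of weight 0 for `⋆` -/
def IsUnitEl (s : ∀ ⦃a b d e : ℤ⦄, W a d → W b e → W (a + b) (d + e))
    (one : El W 0) : Prop :=
  (∀ n : ℤ, n ≠ 0 → one n = 0) ∧
  (∀ ⦃b e : ℤ⦄ (x : W b e), wc (zero_add b) (zero_add e) (s (one 0) x) = x)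

/-- right-normed `⋆`-powers: `v⁰ = 1`, `v^{r+1} = v^r ⋆ v` -/
noncomputable def ppow (s : ∀ ⦃a b d e : ℤ⦄, W a d → W b e → W (a + b) (d + e))
    (one v : El W 0) : ℕ → El W 0
  | 0 => one
  | r + 1 => star0 s (ppow s one v r) v

/-- the pre-Lie exponential `exp(v) = ∑_r v^r / r!` (computed weightwise; for `v ∈ V₊`
only the powers `v^r` with `r ≤ n` contribute in weight `n`) -/
noncomputable def pexp (s : ∀ ⦃a b d e : ℤ⦄, W a d → W b e → W (a + b) (d + e))
    (one v : El W 0) : El W 0 :=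
  fun n => ∑ r ∈ Finset.range (n.toNat + 1), (r.factorial : k)⁻¹ • ppow s one v r n

/-- the symmetric braces of the pre-Lie algebra (Oudom–Guin), defined by the recursion
`u⟨⟩ = u`, `u⟨y, ys⟩ = u⟨ys⟩ ⋆ y − ∑ᵢ u⟨ys with (ysᵢ ⋆ y) in slot i⟩` (all arguments of
degree 0, so no signs occur) -/
noncomputable def sbrace (s : ∀ ⦃a b d e : ℤ⦄, W a d → W b e → W (a + b) (d + e)) {d : ℤ}
    (u : El W d) : List (El W 0) → El W d
  | [] => u
  | y :: ys =>
      dc (by ring) (pstar s (sbrace s u ys) y) -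
        ∑ i ∈ Finset.range ys.length,
          sbrace s u (ys.set i (star0 s (ys.getD i 0) y))
termination_by l => l.length
decreasing_by
  all_goals (simp only [List.length_set, List.length_cons]; omega)

/-- the circle product `u ⊙ (1 + v) = ∑_r u⟨v,…,v⟩_r / r!` (computed weightwise) -/
noncomputable def odotS (s : ∀ ⦃a b d e : ℤ⦄, W a d → W b e → W (a + b) (d + e)) {d : ℤ}
    (u : El W d) (v : El W 0) : El W d :=
  fun n => ∑ r ∈ Finset.range ((n + 2).toNat),
    (r.factorial : k)⁻¹ • sbrace s u (List.replicate r v) n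

/-- the differential `d_μ(v) = μ ⋆ v - (-1)^{|v|} v ⋆ μ` attached to a Maurer-Cartan
element `μ` of degree 1 -/
noncomputable def dmu (s : ∀ ⦃a b d e : ℤ⦄, W a d → W b e → W (a + b) (d + e))
    (mu : El W 1) {d : ℤ} (v : El W d) : El W (d + 1) :=
  dc (by ring) (pstar s mu v) - ((-1 : k) ^ d) • pstar s v mu

/-- `f` is an `∞`-isotopy of `(V, μ)`: a group-like element with `μ ⊙ f = f ⋆ μ` -/
def IsIsotopy (s : ∀ ⦃a b d e : ℤ⦄, W a d → W b e → W (a + b) (d + e))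
    (one : El W 0) (mu : El W 1) (f : El W 0) : Prop :=
  inF 1 (f - one) ∧ odotS (k := k) s mu (f - one) = dc (by norm_num) (pstar s f mu)

/-- homotopy of `∞`-isotopies: `f ∼_∞ g` iff `f ⊙ g⁻¹ = exp(d_μ(h))` for some `h` of
degree `-1` with `d_μ(h) ∈ V₊` (here `g'` denotes the `⊙`-inverse of `g`) -/
def HRel (s : ∀ ⦃a b d e : ℤ⦄, W a d → W b e → W (a + b) (d + e))
    (one : El W 0) (mu : El W 1) (f g : El W 0) : Prop :=
  ∃ g' : El W 0, inF 1 (g' - one) ∧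
    odotS (k := k) s g (g' - one) = one ∧ odotS (k := k) s g' (g - one) = one ∧
    ∃ h : El W (-1), inF 1 (dc (show (-1:ℤ)+1 = 0 by norm_num) (dmu (k := k) s mu h)) ∧
      odotS (k := k) s f (g' - one) =
        pexp (k := k) s one (dc (show (-1:ℤ)+1 = 0 by norm_num) (dmu (k := k) s mu h))

end Stmt

namespace Stmt

variable {k : Type} [Field k]
variable {W : ℤ → ℤ → Type}
variable [∀ n d, AddCommGroup (W n d)] [∀ n d, Module k (W n d)]

lemma wc_zero' {a b d e : ℤ} (h1 : a = b) (h2 : d = e) :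
    wc (W := W) h1 h2 (0 : W a d) = 0 := by subst h1; subst h2; rfl

lemma wc_add' {a b d e : ℤ} (h1 : a = b) (h2 : d = e) (x y : W a d) :
    wc h1 h2 (x + y) = wc h1 h2 x + wc h1 h2 y := by subst h1; subst h2; rfl

lemma wc_wc' {a b c d e f : ℤ} (h1 : a = b) (h2 : d = e) (h3 : b = c) (h4 : e = f)
    (x : W a d) :
    wc h3 h4 (wc h1 h2 x) = wc (h1.trans h3) (h2.trans h4) x := by
  subst h1; subst h2; subst h3; subst h4; rfl

lemma wc_fun' {d : ℤ} (v : El W d) {a b : ℤ} (h : a = b) :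
    wc (W := W) h rfl (v a) = v b := by subst h; rfl

lemma s_zero_left (s : ∀ ⦃a b d e : ℤ⦄, W a d → W b e → W (a + b) (d + e))
    (hbil : IsBilin (k := k) s) {a b d e : ℤ} (y : W b e) :
    s (0 : W a d) y = 0 := by
  have := hbil.2.2.1 (0 : k) (0 : W a d) y
  simpa using this

lemma s_zero_right (s : ∀ ⦃a b d e : ℤ⦄, W a d → W b e → W (a + b) (d + e))
    (hbil : IsBilin (k := k) s) {a b d e : ℤ} (x : W a d) :
    s x (0 : W b e) = 0 := by
  have := hbil.2.2.2 (0 : k) x (0 : W b e)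
  simpa using this

/-- the curvature `κ(ζ) = ∑_{i ≥ 1} μ_V^i(ζ,…,ζ)` of the shifted `A∞`-structure on a
complete brace algebra determined by the Maurer-Cartan element `μ`:
`μ_V¹(ζ) = μ ⋆ ζ - ζ ⋆ μ` (for `|ζ| = 0`) and `μ_V^i(ζ,…,ζ) = μ{ζ,…,ζ}` for `i ≥ 2`
(computed weightwise, the sums being finite in each weight for `ζ ∈ F₁`) -/
noncomputable def kappa (s : ∀ ⦃a b d e : ℤ⦄, W a d → W b e → W (a + b) (d + e))
    (mu : El W 1) (mbr : List (El W 0) → El W 1) (z : El W 0) : El W 1 :=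
  fun n =>
    (dc (show (1:ℤ) + 0 = 1 by norm_num) (pstar s mu z)) n -
      (dc (show (0:ℤ) + 1 = 1 by norm_num) (pstar s z mu)) n +
      ∑ i ∈ Finset.Icc 2 ((n + 2).toNat), mbr (List.replicate i z) n

/-- `μ ⊙ (1 + ζ) = ∑_{i ≥ 0} μ{ζ,…,ζ}_i` (computed weightwise) -/
def muodot (mbr : List (El W 0) → El W 1) (z : El W 0) : El W 1 :=
  fun n => ∑ i ∈ Finset.range ((n + 2).toNat + 1), mbr (List.replicate i z) n

/-- Let `V` be a complete brace algebra with left unit `1`, where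
`mbr l = μ{l}` are the brace operations with head the Maurer-Cartan element
`μ ∈ F₀V¹`, and equip `V` with the shifted `A∞`-structure
`μ_V¹(f) = μ ⋆ f - (-1)^{|f|} f ⋆ μ`, `μ_V^i = μ{-,…,-}`.  Then for a group-like
element `f = 1 + f₊` with `f₊ ∈ F₂V⁰`, the curvature satisfies
`κ(f₊) = μ ⊙ f - f ⋆ μ`; hence `f₊` is a Maurer-Cartan element of the `A∞`-algebra
`F₂V` iff `f` is an `∞`-isotopy of `(V, μ)`. -/
theorem stmt_11 {k : Type} [Field k]
    {W : ℤ → ℤ → Type} [∀ n d, AddCommGroup (W n d)] [∀ n d, Module k (W n d)]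
    (s : ∀ ⦃a b d e : ℤ⦄, W a d → W b e → W (a + b) (d + e))
    (one : El W 0) (mu : El W 1)
    (mbr : List (El W 0) → El W 1)
    (hbil : IsBilin (k := k) s) (hone : IsUnitEl s one)
    (hmuF : inF 0 mu) (hMC : pstar s mu mu = 0)
    (hmbr_nil : mbr [] = mu)
    (hmbr_one : ∀ f : El W 0,
      mbr [f] = dc (show (1:ℤ) + 0 = 1 by norm_num) (pstar s mu f))
    (hmbr_add : ∀ (pre post : List (El W 0)) (y y' : El W 0),
      mbr (pre ++ (y + y') :: post) = mbr (pre ++ y :: post) + mbr (pre ++ y' :: post))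
    (hmbr_filt : ∀ (l : List (El W 0)) (m : ℤ), inF m mu → (∀ g ∈ l, inF 1 g) →
      inF (m + l.length) (mbr l))
    (fp : El W 0) (hfp : inF 2 fp) :
    kappa s mu mbr fp =
        muodot mbr fp -
          dc (show (0:ℤ) + 1 = 1 by norm_num) (pstar s (one + fp) mu) ∧
      (kappa s mu mbr fp = 0 ↔
        muodot mbr fp =
          dc (show (0:ℤ) + 1 = 1 by norm_num) (pstar s (one + fp) mu)) := by
  have hA : ∀ n : ℤ, n ≤ -2 → pstar s mu fp n = 0 := by
    intro n hn
    unfold pstar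
    apply Finset.sum_eq_zero
    intro a ha
    simp only [Finset.mem_Icc] at ha
    rw [hfp (n - a) (by omega), s_zero_right s hbil, wc_zero']
  have hsplit : ∀ n : ℤ,
      pstar s (one + fp) mu n = pstar s one mu n + pstar s fp mu n := by
    intro n
    unfold pstar
    rw [← Finset.sum_add_distrib]
    refine Finset.sum_congr rfl fun a _ => ?_
    rw [Pi.add_apply, hbil.1, wc_add']
  have hone' : ∀ n : ℤ,
      wc (rfl : n = n) (show (0:ℤ) + 1 = 1 by norm_num) (pstar s one mu n) = mu n := by
    intro n
    unfold pstar
    rw [Finset.sum_eq_single (0 : ℤ)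
      (fun a _ hne => by rw [hone.1 a hne, s_zero_left s hbil, wc_zero'])
      (fun h0 => by
        have hn : n < -1 := by
          simp only [Finset.mem_Icc] at h0; omega
        rw [hmuF (n - 0) (by omega), s_zero_right s hbil, wc_zero'])]
    rw [wc_wc']
    calc wc ((show (0:ℤ) + (n - 0) = n by ring).trans rfl)
          ((rfl : (0:ℤ)+1 = 0+1).trans (show (0:ℤ) + 1 = 1 by norm_num))
          (s (one 0) (mu (n - 0)))
        = wc (sub_zero n) rfl
            (wc (zero_add (n - 0)) (zero_add 1) (s (one 0) (mu (n - 0)))) :=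
          (wc_wc' _ _ _ _ _).symm
      _ = wc (sub_zero n) rfl (mu (n - 0)) := by rw [hone.2]
      _ = mu n := wc_fun' mu (sub_zero n)
  have key : kappa s mu mbr fp =
      muodot mbr fp - dc (show (0:ℤ) + 1 = 1 by norm_num) (pstar s (one + fp) mu) := by
    funext n
    simp only [kappa, muodot, Pi.sub_apply, dc]
    rw [hsplit n, wc_add', hone' n]
    rcases Nat.eq_zero_or_pos ((n + 2).toNat) with hm | hm
    · rw [hm]
      rw [show ((0:ℕ) + 1) = 1 from rfl, Finset.sum_range_one,
        show Finset.Icc 2 0 = (∅ : Finset ℕ) from rfl, Finset.sum_empty,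
        List.replicate_zero, hmbr_nil, hA n (by omega), wc_zero']
      abel
    · have hsplit2 :
          ∑ i ∈ Finset.range ((n + 2).toNat + 1), mbr (List.replicate i fp) n
            = mbr [] n + mbr [fp] n +
              ∑ i ∈ Finset.Icc 2 ((n + 2).toNat), mbr (List.replicate i fp) n := by
        rw [Finset.range_eq_Ico,
          ← Finset.sum_Ico_consecutive (fun i => mbr (List.replicate i fp) n)
            (by omega : 0 ≤ 2) (by omega : 2 ≤ (n + 2).toNat + 1)]
        rw [show Finset.Ico 2 ((n + 2).toNat + 1) = Finset.Icc 2 ((n + 2).toNat) from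
          Finset.Ico_add_one_right_eq_Icc 2 ((n + 2).toNat)]
        congr 1
        rw [show Finset.Ico 0 2 = Finset.range 2 from rfl]
        simp [Finset.sum_range_succ]
      rw [hsplit2, hmbr_nil, congrFun (hmbr_one fp) n]
      simp only [dc]
      abel
  exact ⟨key, by rw [key, sub_eq_zero]⟩

end Stmt
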